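/- Suppose C_1 = C_2 = C, ρ_{12} ≠ 0, |ρ_{12}| ≤ ρ_{11} and |ρ_{12}| ≤ ρ_{22}. Then for every Q with 0 < Q < 2|ρ_{12}|, P_cor^opt(Q) = (1−Q)/2 + ((2C−1)/2)·√((1−2|ρ_{12}|)(1+2|ρ_{12}|−2Q)). -/

import Mathlib

/-!
Write `r = |ρ₁₂|` and `d = √((1 - 2r)(1 + 2r - 2Q))`. After rotating `ν₂` by a phase so that
`⟨ν₁, ρ₀ν₂⟩ = r`, let `U` have columns `ν₁, ν₂` and `G = ρ₀^{1/2} U`. Then `qᵢρᵢ = G Dᵢ Gᴴ` with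
`D₁ = diag(C, 1 - C)`, `D₂ = diag(1 - C, C)`, and `Tₖ = Gᴴ Mₖ G` identifies POVMs with
`P_I = Q` with positive semidefinite decompositions `T₀ + T₁ + T₂ = R = [[ρ₁₁, r], [r, ρ₂₂]]`
with `tr T₀ = Q`; in these coordinates
`P_cor = (1 - Q)/2 + (C - 1/2) tr(σ_z (T₁ - T₂))`.
The maximum of `tr(σ_z (T₁ - T₂))` is `d`: the matrix `Y = [[y, -c], [-c, y]]` with
`y = (1 - Q)/d`, `c = (2r - Q)/d` satisfies `Y ≥ ±σ_z` and `Y ≥ (y - c) I`, which bounds it by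
`tr(Y R) - (y - c) Q = d`, and rank-one `T₀, T₁, T₂` in the kernels of these three differences
attain the bound.
-/

open Matrix ComplexOrder

noncomputable section

namespace FRIR

/-- A three-outcome POVM on a qubit: `M₀` is the inconclusive outcome. -/
def IsPOVM (M₀ M₁ M₂ : Matrix (Fin 2) (Fin 2) ℂ) : Prop :=
  M₀.PosSemidef ∧ M₁.PosSemidef ∧ M₂.PosSemidef ∧ M₀ + M₁ + M₂ = 1

/-- `ρ₀ = q₁ρ₁ + q₂ρ₂`. -/
def rho0 (q₁ q₂ : ℝ) (ρ₁ ρ₂ : Matrix (Fin 2) (Fin 2) ℂ) : Matrix (Fin 2) (Fin 2) ℂ :=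
  (q₁ : ℂ) • ρ₁ + (q₂ : ℂ) • ρ₂

/-- The probability of the inconclusive result, `P_I = tr(ρ₀M₀)`. -/
def PIof (q₁ q₂ : ℝ) (ρ₁ ρ₂ M₀ : Matrix (Fin 2) (Fin 2) ℂ) : ℝ :=
  (Matrix.trace (rho0 q₁ q₂ ρ₁ ρ₂ * M₀)).re

/-- `P_cor = q₁tr(ρ₁M₁) + q₂tr(ρ₂M₂)`. -/
def Pcor (q₁ q₂ : ℝ) (ρ₁ ρ₂ M₁ M₂ : Matrix (Fin 2) (Fin 2) ℂ) : ℝ :=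
  q₁ * (Matrix.trace (ρ₁ * M₁)).re + q₂ * (Matrix.trace (ρ₂ * M₂)).re

/-- `P̄_cor = q·tr(ρ₀M₀) + q₁tr(ρ₁M₁) + q₂tr(ρ₂M₂)`. -/
def PbarCor (q q₁ q₂ : ℝ) (ρ₁ ρ₂ M₀ M₁ M₂ : Matrix (Fin 2) (Fin 2) ℂ) : ℝ :=
  q * PIof q₁ q₂ ρ₁ ρ₂ M₀ + Pcor q₁ q₂ ρ₁ ρ₂ M₁ M₂

/-- `P̄_cor^opt(q)`: the maximal value of `P̄_cor` over all POVMs. -/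
def PbarOpt (q q₁ q₂ : ℝ) (ρ₁ ρ₂ : Matrix (Fin 2) (Fin 2) ℂ) : ℝ :=
  sSup {x : ℝ | ∃ M₀ M₁ M₂, IsPOVM M₀ M₁ M₂ ∧ PbarCor q q₁ q₂ ρ₁ ρ₂ M₀ M₁ M₂ = x}

/-- `P_cor^opt(Q)`: the maximal value of `P_cor` over POVMs with `P_I = Q`. -/
def PcorOpt (Q q₁ q₂ : ℝ) (ρ₁ ρ₂ : Matrix (Fin 2) (Fin 2) ℂ) : ℝ :=
  sSup {x : ℝ | ∃ M₀ M₁ M₂, IsPOVM M₀ M₁ M₂ ∧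
    PIof q₁ q₂ ρ₁ ρ₂ M₀ = Q ∧ Pcor q₁ q₂ ρ₁ ρ₂ M₁ M₂ = x}

/-- `P_I(q) = { tr(ρ₀M₀) : POVMs attaining P̄_cor^opt(q) }`. -/
def PIset (q q₁ q₂ : ℝ) (ρ₁ ρ₂ : Matrix (Fin 2) (Fin 2) ℂ) : Set ℝ :=
  {Q : ℝ | ∃ M₀ M₁ M₂, IsPOVM M₀ M₁ M₂ ∧
    PbarCor q q₁ q₂ ρ₁ ρ₂ M₀ M₁ M₂ = PbarOpt q q₁ q₂ ρ₁ ρ₂ ∧ PIof q₁ q₂ ρ₁ ρ₂ M₀ = Q}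

/-- `q₀⁽⁰⁾ = sup{q > 0 : 0 ∈ P_I(q)}`. -/
def q0low (q₁ q₂ : ℝ) (ρ₁ ρ₂ : Matrix (Fin 2) (Fin 2) ℂ) : ℝ :=
  sSup {q : ℝ | 0 < q ∧ (0 : ℝ) ∈ PIset q q₁ q₂ ρ₁ ρ₂}

/-- `q₀⁽¹⁾ = inf{q > 0 : 1 ∈ P_I(q)}`. -/
def q0high (q₁ q₂ : ℝ) (ρ₁ ρ₂ : Matrix (Fin 2) (Fin 2) ℂ) : ℝ :=
  sInf {q : ℝ | 0 < q ∧ (1 : ℝ) ∈ PIset q q₁ q₂ ρ₁ ρ₂}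

open scoped MatrixOrder in
lemma re_trace_mul_nonneg {n : Type*} [Fintype n] [DecidableEq n] {A B : Matrix n n ℂ}
    (hA : A.PosSemidef) (hB : B.PosSemidef) : 0 ≤ (trace (A * B)).re := by
  obtain ⟨X, rfl⟩ := CStarAlgebra.nonneg_iff_eq_star_mul_self.mp hB.nonneg
  have h := (hA.mul_mul_conjTranspose_same X).trace_nonneg
  rw [star_eq_conjTranspose, ← Matrix.mul_assoc, trace_mul_comm, ← Matrix.mul_assoc]
  exact (Complex.nonneg_iff.mp h).1

def symMat (a b t : ℝ) : Matrix (Fin 2) (Fin 2) ℂ :=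
  !![(a : ℂ), t; t, b]

lemma symMat_posSemidef {a b t : ℝ} (ha : 0 ≤ a) (hb : 0 ≤ b) (ht : t ^ 2 ≤ a * b) :
    (symMat a b t).PosSemidef := by
  refine .of_dotProduct_mulVec_nonneg ?_ fun x => ?_
  · ext i j
    fin_cases i <;> fin_cases j <;> simp [symMat]
  set p := ‖x 0‖
  set q := ‖x 1‖
  set u := (star (x 0) * x 1).re
  have hform : star x ⬝ᵥ (symMat a b t *ᵥ x) = ((a * p ^ 2 + b * q ^ 2 + 2 * t * u : ℝ) : ℂ) := by
    apply Complex.ext <;>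
      simp [p, q, u, symMat, dotProduct, Matrix.mulVec, Fin.sum_univ_two, Complex.sq_norm,
        Complex.normSq_apply] <;> ring
  have hu : |u| ≤ p * q := by simpa [u, p, q] using Complex.abs_re_le_norm (star (x 0) * x 1)
  have htu : -(t * u) ≤ |t| * (p * q) :=
    (neg_le_abs _).trans ((abs_mul t u).trans_le (mul_le_mul_of_nonneg_left hu (abs_nonneg t)))
  have hs : (|t| * (p * q)) ^ 2 ≤ (a * p ^ 2) * (b * q ^ 2) := by
    rw [mul_pow, sq_abs]
    nlinarith [sq_nonneg (p * q), mul_nonneg (sq_nonneg p) (sq_nonneg q)]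
  have hX : 0 ≤ a * p ^ 2 := by positivity
  have hY : 0 ≤ b * q ^ 2 := by positivity
  rw [hform, Complex.zero_le_real]
  nlinarith [sq_nonneg (a * p ^ 2 - b * q ^ 2), abs_nonneg t, norm_nonneg (x 0), norm_nonneg (x 1)]

lemma re_trace_symMat_mul (a b t : ℝ) (T : Matrix (Fin 2) (Fin 2) ℂ) :
    (trace (symMat a b t * T)).re
      = a * (T 0 0).re + b * (T 1 1).re + t * (T 0 1 + T 1 0).re := by
  simp [symMat, trace_fin_two, Matrix.vecMul, dotProduct, Fin.sum_univ_two]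
  ring

@[simp] lemma symMat_apply_zero_zero (a b t : ℝ) : symMat a b t 0 0 = a := rfl
@[simp] lemma symMat_apply_zero_one (a b t : ℝ) : symMat a b t 0 1 = t := rfl
@[simp] lemma symMat_apply_one_zero (a b t : ℝ) : symMat a b t 1 0 = t := rfl
@[simp] lemma symMat_apply_one_one (a b t : ℝ) : symMat a b t 1 1 = b := rfl

lemma symMat_add (a b t a' b' t' : ℝ) :
    symMat a b t + symMat a' b' t' = symMat (a + a') (b + b') (t + t') := by
  ext i j
  fin_cases i <;> fin_cases j <;> simp

lemma symMat_one : symMat 1 1 0 = 1 := by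
  rw [symMat, one_fin_two]
  simp

lemma re_trace_symMat (a b t : ℝ) : (trace (symMat a b t)).re = a + b := by
  simp [trace_fin_two]

/-- The values of `P_cor` at `P_I = Q` in the coordinates `Tₖ = Gᴴ Mₖ G`, where `R = Gᴴ G` and
`qᵢ ρᵢ = G Dᵢ Gᴴ` (see `pcorOpt_eq_sSup_reducedValues`). -/
def reducedValues (R D₁ D₂ : Matrix (Fin 2) (Fin 2) ℂ) (Q : ℝ) : Set ℝ :=
  {x | ∃ T₀ T₁ T₂ : Matrix (Fin 2) (Fin 2) ℂ, T₀.PosSemidef ∧ T₁.PosSemidef ∧ T₂.PosSemidef ∧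
    T₀ + T₁ + T₂ = R ∧ (trace T₀).re = Q ∧ (trace (D₁ * T₁)).re + (trace (D₂ * T₂)).re = x}

section reduced

variable {ρ11 ρ22 r C Q : ℝ}

lemma sqrt_discr_pos_and_sq (hr : 2 * r < 1) (hQr : Q ≤ 2 * r) :
    0 < √((1 - 2 * r) * (1 + 2 * r - 2 * Q)) ∧
      √((1 - 2 * r) * (1 + 2 * r - 2 * Q)) ^ 2 = (1 - 2 * r) * (1 + 2 * r - 2 * Q) := by
  have h : 0 < (1 - 2 * r) * (1 + 2 * r - 2 * Q) := mul_pos (by linarith) (by linarith)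
  exact ⟨Real.sqrt_pos.mpr h, Real.sq_sqrt h.le⟩

/-- Weak duality: `Y = symMat y y (-c)` dominates `±σ_z` and `(y - c) • 1`. -/
lemma le_of_mem_reducedValues {x : ℝ} (hsum : ρ11 + ρ22 = 1) (hr : 2 * r < 1) (hQr : Q ≤ 2 * r)
    (hC : 1 ≤ 2 * C)
    (hx : x ∈ reducedValues (symMat ρ11 ρ22 r) (symMat C (1 - C) 0) (symMat (1 - C) C 0) Q) :
    x ≤ (1 - Q) / 2 + (2 * C - 1) / 2 * √((1 - 2 * r) * (1 + 2 * r - 2 * Q)) := by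
  obtain ⟨T₀, T₁, T₂, hT₀, hT₁, hT₂, hT, hQ, rfl⟩ := hx
  obtain ⟨hd, hd2⟩ := sqrt_discr_pos_and_sq hr hQr
  set d := √((1 - 2 * r) * (1 + 2 * r - 2 * Q))
  set y := (1 - Q) / d
  set c := (2 * r - Q) / d
  have hc : 0 ≤ c := div_nonneg (by linarith) hd.le
  have hyc : y ^ 2 - c ^ 2 = 1 := by
    simp only [y, c, div_pow]
    field_simp
    linear_combination -hd2
  have hy : 1 ≤ y := by
    have : 0 ≤ y := div_nonneg (by linarith) hd.le
    nlinarith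
  have hval : y * (1 - Q) - c * (2 * r - Q) = d := by
    simp only [y, c]
    field_simp
    linear_combination -hd2
  have h₁ := re_trace_mul_nonneg (symMat_posSemidef (a := y - 1) (b := y + 1) (t := -c)
    (by linarith) (by linarith) (by nlinarith)) hT₁
  have h₂ := re_trace_mul_nonneg (symMat_posSemidef (a := y + 1) (b := y - 1) (t := -c)
    (by linarith) (by linarith) (by nlinarith)) hT₂
  have h₀ := re_trace_mul_nonneg (symMat_posSemidef (a := c) (b := c) (t := -c)
    hc hc (by nlinarith)) hT₀
  have e : ∀ i j, (T₀ i j).re + (T₁ i j).re + (T₂ i j).re = (symMat ρ11 ρ22 r i j).re :=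
    fun i j => by simp [← hT]
  have e00 := e 0 0
  have e11 := e 1 1
  have e01 := e 0 1
  have e10 := e 1 0
  simp only [re_trace_symMat_mul, Complex.add_re] at h₀ h₁ h₂ ⊢
  simp only [trace_fin_two, Complex.add_re] at hQ
  simp only [symMat_apply_zero_zero, symMat_apply_one_one, symMat_apply_zero_one,
    symMat_apply_one_zero, Complex.ofReal_re] at e00 e11 e01 e10
  have key : (T₁ 0 0).re - (T₁ 1 1).re - (T₂ 0 0).re + (T₂ 1 1).re ≤ d := by
    nlinarith
  nlinarith [mul_le_mul_of_nonneg_left key (by linarith : (0:ℝ) ≤ 2 * C - 1)]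

/-- Complementary slackness: the ranges of the rank-one `T₀`, `T₁`, `T₂` lie in the kernels of
`Y - (y - c) • 1`, `Y - σ_z` and `Y + σ_z`. -/
lemma mem_reducedValues (hsum : ρ11 + ρ22 = 1) (h₁ : r ≤ ρ11) (h₂ : r ≤ ρ22) (hr : 2 * r < 1)
    (hQ : 0 ≤ Q) (hQr : Q ≤ 2 * r) :
    (1 - Q) / 2 + (2 * C - 1) / 2 * √((1 - 2 * r) * (1 + 2 * r - 2 * Q)) ∈
      reducedValues (symMat ρ11 ρ22 r) (symMat C (1 - C) 0) (symMat (1 - C) C 0) Q := by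
  obtain ⟨hd, hd2⟩ := sqrt_discr_pos_and_sq hr hQr
  set d := √((1 - 2 * r) * (1 + 2 * r - 2 * Q))
  set s := 1 - Q
  set δ := ρ11 - ρ22
  set γ := r - Q / 2
  set k₁ := (d + δ) / (4 * d)
  set k₂ := (d - δ) / (4 * d)
  have hδ : δ ^ 2 ≤ d ^ 2 := by
    have hρ : ρ11 = 1 - ρ22 := by linarith
    simp only [δ, hd2, hρ]
    nlinarith [mul_nonneg (sub_nonneg.mpr h₁) (sub_nonneg.mpr h₂)]
  have hsd2 : (s + d) * (s - d) = 4 * γ ^ 2 := by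
    simp only [s, γ]
    linear_combination -hd2
  have hsd : d ≤ s := (abs_le_of_sq_le_sq' (by nlinarith) (by simp only [s]; linarith)).2
  have hk₁ : 0 ≤ k₁ := div_nonneg (by linarith [(abs_le_of_sq_le_sq' hδ hd.le).1]) (by positivity)
  have hk₂ : 0 ≤ k₂ := div_nonneg (by linarith [(abs_le_of_sq_le_sq' hδ hd.le).2]) (by positivity)
  have hk : k₁ + k₂ = 1 / 2 := by
    simp only [k₁, k₂]
    field_simp
    ring
  have hkd : (k₁ - k₂) * d = δ / 2 := by
    simp only [k₁, k₂]
    field_simp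
    ring
  refine ⟨symMat (Q / 2) (Q / 2) (Q / 2), symMat (k₁ * (s + d)) (k₁ * (s - d)) (k₁ * (2 * γ)),
    symMat (k₂ * (s - d)) (k₂ * (s + d)) (k₂ * (2 * γ)),
    symMat_posSemidef (by positivity) (by positivity) (by nlinarith),
    symMat_posSemidef (by nlinarith) (by nlinarith)
      (le_of_eq (by linear_combination (-k₁ ^ 2) * hsd2)),
    symMat_posSemidef (by nlinarith) (by nlinarith)
      (le_of_eq (by linear_combination (-k₂ ^ 2) * hsd2)),
    ?_, by rw [re_trace_symMat]; ring, ?_⟩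
  · rw [symMat_add, symMat_add]
    congr 1
    · linear_combination s * hk + hkd - hsum / 2
    · linear_combination s * hk - hkd - hsum / 2
    · linear_combination 2 * γ * hk
  · simp only [re_trace_symMat_mul, symMat_apply_zero_zero, symMat_apply_one_one,
      symMat_apply_zero_one, symMat_apply_one_zero, Complex.ofReal_re, Complex.add_re]
    linear_combination (s + (2 * C - 1) * d) * hk

lemma isGreatest_reducedValues (hsum : ρ11 + ρ22 = 1) (h₁ : r ≤ ρ11) (h₂ : r ≤ ρ22)
    (hr : 2 * r < 1) (hQ : 0 ≤ Q) (hQr : Q ≤ 2 * r) (hC : 1 ≤ 2 * C) :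
    IsGreatest (reducedValues (symMat ρ11 ρ22 r) (symMat C (1 - C) 0) (symMat (1 - C) C 0) Q)
      ((1 - Q) / 2 + (2 * C - 1) / 2 * √((1 - 2 * r) * (1 + 2 * r - 2 * Q))) :=
  ⟨mem_reducedValues hsum h₁ h₂ hr hQ hQr, fun _ hx => le_of_mem_reducedValues hsum hr hQr hC hx⟩

end reduced

lemma conjTranspose_mul_inv_conj_mul {n : Type*} [Fintype n] [DecidableEq n]
    {G : Matrix n n ℂ} (hG : IsUnit G.det) (T : Matrix n n ℂ) :
    Gᴴ * (G⁻¹ᴴ * T * G⁻¹) * G = T := by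
  calc Gᴴ * (G⁻¹ᴴ * T * G⁻¹) * G = (G⁻¹ * G)ᴴ * T * (G⁻¹ * G) := by
        simp only [conjTranspose_mul, Matrix.mul_assoc]
    _ = T := by rw [nonsing_inv_mul _ hG, conjTranspose_one, Matrix.one_mul, Matrix.mul_one]

lemma mul_re_trace_mul_eq_of_smul_eq {n : Type*} [Fintype n] {q : ℝ} {ρ D G : Matrix n n ℂ}
    (h : (q : ℂ) • ρ = G * D * Gᴴ) (M : Matrix n n ℂ) :
    q * (trace (ρ * M)).re = (trace (D * (Gᴴ * M * G))).re := by
  rw [← Complex.re_ofReal_mul, ← smul_eq_mul, ← trace_smul, ← smul_mul, h, Matrix.mul_assoc,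
    Matrix.mul_assoc, trace_mul_comm]
  simp only [Matrix.mul_assoc]

lemma pcorOpt_eq_sSup_reducedValues {q₁ q₂ Q : ℝ} {ρ₁ ρ₂ G D₁ D₂ : Matrix (Fin 2) (Fin 2) ℂ}
    (hG : IsUnit G.det) (h₁ : (q₁ : ℂ) • ρ₁ = G * D₁ * Gᴴ)
    (h₂ : (q₂ : ℂ) • ρ₂ = G * D₂ * Gᴴ) (hD : D₁ + D₂ = 1) :
    PcorOpt Q q₁ q₂ ρ₁ ρ₂ = sSup (reducedValues (Gᴴ * G) D₁ D₂ Q) := by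
  have hρ₀ : rho0 q₁ q₂ ρ₁ ρ₂ = G * Gᴴ := by
    rw [rho0, h₁, h₂, ← add_mul, ← mul_add, hD, mul_one]
  have hPI : ∀ M, PIof q₁ q₂ ρ₁ ρ₂ M = (trace (Gᴴ * M * G)).re := fun M => by
    rw [PIof, hρ₀, Matrix.mul_assoc, trace_mul_comm, Matrix.mul_assoc]
  have hPcor : ∀ M₁ M₂, Pcor q₁ q₂ ρ₁ ρ₂ M₁ M₂
      = (trace (D₁ * (Gᴴ * M₁ * G))).re + (trace (D₂ * (Gᴴ * M₂ * G))).re := fun M₁ M₂ => by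
    rw [Pcor, mul_re_trace_mul_eq_of_smul_eq h₁, mul_re_trace_mul_eq_of_smul_eq h₂]
  unfold PcorOpt
  congr 1
  ext x
  constructor
  · rintro ⟨M₀, M₁, M₂, ⟨hM₀, hM₁, hM₂, hM⟩, hQ, rfl⟩
    refine ⟨Gᴴ * M₀ * G, Gᴴ * M₁ * G, Gᴴ * M₂ * G, hM₀.conjTranspose_mul_mul_same G,
      hM₁.conjTranspose_mul_mul_same G, hM₂.conjTranspose_mul_mul_same G, ?_, hPI M₀ ▸ hQ,
      (hPcor M₁ M₂).symm⟩
    rw [← Matrix.add_mul, ← Matrix.add_mul, ← Matrix.mul_add, ← Matrix.mul_add, hM, Matrix.mul_one]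
  · rintro ⟨T₀, T₁, T₂, hT₀, hT₁, hT₂, hT, hQ, rfl⟩
    refine ⟨G⁻¹ᴴ * T₀ * G⁻¹, G⁻¹ᴴ * T₁ * G⁻¹, G⁻¹ᴴ * T₂ * G⁻¹,
      ⟨hT₀.conjTranspose_mul_mul_same _, hT₁.conjTranspose_mul_mul_same _,
        hT₂.conjTranspose_mul_mul_same _, ?_⟩, ?_, ?_⟩
    · rw [← Matrix.add_mul, ← Matrix.add_mul, ← Matrix.mul_add, ← Matrix.mul_add, hT]
      calc G⁻¹ᴴ * (Gᴴ * G) * G⁻¹ = (G * G⁻¹)ᴴ * (G * G⁻¹) := by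
            simp only [conjTranspose_mul, Matrix.mul_assoc]
        _ = 1 := by rw [mul_nonsing_inv _ hG, conjTranspose_one, Matrix.one_mul]
    · rw [hPI, conjTranspose_mul_inv_conj_mul hG, hQ]
    · rw [hPcor, conjTranspose_mul_inv_conj_mul hG, conjTranspose_mul_inv_conj_mul hG]

lemma exists_phase {z : ℂ} (hz : z ≠ 0) : ∃ u : ℂ, star u * u = 1 ∧ u * z = ‖z‖ := by
  have hn : (‖z‖ : ℂ) ≠ 0 := by exact_mod_cast norm_ne_zero_iff.mpr hz
  refine ⟨star z / ‖z‖, ?_, ?_⟩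
  · rw [star_div₀, star_star, Complex.star_def, Complex.conj_ofReal]
    field_simp
    rw [Complex.mul_conj']
  · field_simp
    rw [Complex.star_def, Complex.conj_mul']

section phase

variable {u : ℂ} (hu : star u * u = 1)
include hu

lemma star_smul_dotProduct_smul {n : Type*} [Fintype n] (v w : n → ℂ) :
    star (u • v) ⬝ᵥ (u • w) = star v ⬝ᵥ w := by
  rw [star_smul, smul_dotProduct, dotProduct_smul, smul_smul, hu, one_smul]

lemma vecMulVec_smul_star_smul {n : Type*} (v : n → ℂ) :
    vecMulVec (u • v) (star (u • v)) = vecMulVec v (star v) := by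
  ext i j
  simp only [vecMulVec_apply, Pi.smul_apply, Pi.star_apply, smul_eq_mul, star_mul']
  linear_combination (v i * star (v j)) * hu

end phase

lemma conjTranspose_mul_mul_transpose_of_apply {m n : Type*} [Fintype n] (v : m → n → ℂ)
    (A : Matrix n n ℂ) (i j : m) :
    ((of v)ᵀᴴ * A * (of v)ᵀ) i j = star (v i) ⬝ᵥ (A *ᵥ v j) := by
  simp only [Matrix.mul_apply, dotProduct, mulVec, Finset.mul_sum, Finset.sum_mul]
  rw [Finset.sum_comm]
  simp [mul_assoc]

section frame

variable {ν₁ ν₂ : Fin 2 → ℂ}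

lemma conjTranspose_mul_self_transpose_of (hν₁ : star ν₁ ⬝ᵥ ν₁ = 1) (hν₂ : star ν₂ ⬝ᵥ ν₂ = 1)
    (hν₁₂ : star ν₁ ⬝ᵥ ν₂ = 0) : (of ![ν₁, ν₂])ᵀᴴ * (of ![ν₁, ν₂])ᵀ = 1 := by
  have e := conjTranspose_mul_mul_transpose_of_apply ![ν₁, ν₂] 1
  simp only [Matrix.mul_one, one_mulVec] at e
  rw [eta_fin_two ((of ![ν₁, ν₂])ᵀᴴ * (of ![ν₁, ν₂])ᵀ), one_fin_two, e, e, e, e]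
  simp [hν₁, hν₂, hν₁₂, star_dotProduct ν₂ ν₁]

lemma conjTranspose_mul_mul_transpose_of_eq_symMat {A : Matrix (Fin 2) (Fin 2) ℂ}
    (hA : A.IsHermitian) {a b t : ℝ} (ha : star ν₁ ⬝ᵥ (A *ᵥ ν₁) = a)
    (hb : star ν₂ ⬝ᵥ (A *ᵥ ν₂) = b) (ht : star ν₁ ⬝ᵥ (A *ᵥ ν₂) = t) :
    (of ![ν₁, ν₂])ᵀᴴ * A * (of ![ν₁, ν₂])ᵀ = symMat a b t := by
  have e := conjTranspose_mul_mul_transpose_of_apply ![ν₁, ν₂] A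
  have e01 : ((of ![ν₁, ν₂])ᵀᴴ * A * (of ![ν₁, ν₂])ᵀ) 0 1 = t := by simpa [e] using ht
  rw [eta_fin_two ((of ![ν₁, ν₂])ᵀᴴ * A * (of ![ν₁, ν₂])ᵀ),
    ← (isHermitian_conjTranspose_mul_mul _ hA).apply 1 0, e01, e, e]
  simp only [Matrix.cons_val_zero, Matrix.cons_val_one, ha, hb, Complex.star_def,
    Complex.conj_ofReal]
  rfl

lemma transpose_of_mul_symMat_mul_conjTranspose (ν₁ ν₂ : Fin 2 → ℂ) (a b : ℝ) :
    (of ![ν₁, ν₂])ᵀ * symMat a b 0 * (of ![ν₁, ν₂])ᵀᴴ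
      = (a : ℂ) • vecMulVec ν₁ (star ν₁) + (b : ℂ) • vecMulVec ν₂ (star ν₂) := by
  ext i j
  simp [symMat, Matrix.mul_apply, Fin.sum_univ_two, vecMulVec_apply]
  ring

end frame

lemma trace_rho0 {q₁ q₂ : ℝ} {ρ₁ ρ₂ : Matrix (Fin 2) (Fin 2) ℂ} (hq : q₁ + q₂ = 1)
    (htr₁ : ρ₁.trace = 1) (htr₂ : ρ₂.trace = 1) : (rho0 q₁ q₂ ρ₁ ρ₂).trace = 1 := by
  simp [rho0, htr₁, htr₂]
  exact_mod_cast hq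

lemma two_mul_lt_add_of_symMat_posDef {a b t : ℝ} (h : (symMat a b t).PosDef) : 2 * t < a + b := by
  have := h.dotProduct_mulVec_pos (x := ![(1 : ℂ), -1]) (by simp [funext_iff])
  simp [symMat, dotProduct, mulVec, Fin.sum_univ_two] at this
  norm_cast at this
  linarith

theorem stmt19_general
    (q₁ q₂ : ℝ) (ρ₁ ρ₂ : Matrix (Fin 2) (Fin 2) ℂ)
    (hq : q₁ + q₂ = 1)
    (htr₁ : ρ₁.trace = 1)
    (htr₂ : ρ₂.trace = 1)
    (hρ0 : (rho0 q₁ q₂ ρ₁ ρ₂).PosDef)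
    (S : Matrix (Fin 2) (Fin 2) ℂ) (hS : S.PosSemidef) (hSS : S * S = rho0 q₁ q₂ ρ₁ ρ₂)
    (ν₁ ν₂ : Fin 2 → ℂ)
    (hν₁ : star ν₁ ⬝ᵥ ν₁ = 1) (hν₂ : star ν₂ ⬝ᵥ ν₂ = 1) (hν₁₂ : star ν₁ ⬝ᵥ ν₂ = 0)
    (C₁ C₂ : ℝ) (hCsum : 1 < C₁ + C₂)
    (hbar₁ : S * ((C₁ : ℂ) • vecMulVec ν₁ (star ν₁)
        + ((1 - C₂ : ℝ) : ℂ) • vecMulVec ν₂ (star ν₂)) * S = (q₁ : ℂ) • ρ₁)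
    (hbar₂ : S * (((1 - C₁ : ℝ) : ℂ) • vecMulVec ν₁ (star ν₁)
        + (C₂ : ℂ) • vecMulVec ν₂ (star ν₂)) * S = (q₂ : ℂ) • ρ₂)
    (ρ11 ρ22 : ℝ) (ρ12 : ℂ)
    (h11 : (ρ11 : ℂ) = star ν₁ ⬝ᵥ (rho0 q₁ q₂ ρ₁ ρ₂ *ᵥ ν₁))
    (h22 : (ρ22 : ℂ) = star ν₂ ⬝ᵥ (rho0 q₁ q₂ ρ₁ ρ₂ *ᵥ ν₂))
    (h12 : ρ12 = star ν₁ ⬝ᵥ (rho0 q₁ q₂ ρ₁ ρ₂ *ᵥ ν₂))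
    (hCeq : C₁ = C₂)
    (h1 : ‖ρ12‖ ≤ ρ11) (h2 : ‖ρ12‖ ≤ ρ22) :
    ∀ Q : ℝ, 0 < Q → Q < 2 * ‖ρ12‖ →
      PcorOpt Q q₁ q₂ ρ₁ ρ₂ = (1 - Q) / 2 + ((2 * C₂ - 1) / 2)
        * Real.sqrt ((1 - 2 * ‖ρ12‖) * (1 + 2 * ‖ρ12‖ - 2 * Q)) := by
  intro Q hQ hQr
  -- rotating `ν₂` by a phase makes the off-diagonal entry `⟨ν₁, ρ₀ν₂⟩ = ‖ρ12‖` real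
  obtain ⟨u, hu, hur⟩ := exists_phase (norm_pos_iff.mp (by linarith : 0 < ‖ρ12‖))
  set r := ‖ρ12‖
  set U : Matrix (Fin 2) (Fin 2) ℂ := (of ![ν₁, u • ν₂])ᵀ
  have hU : Uᴴ * U = 1 := conjTranspose_mul_self_transpose_of hν₁
    (by rw [star_smul_dotProduct_smul hu, hν₂]) (by rw [dotProduct_smul, hν₁₂, smul_zero])
  have hR : (S * U)ᴴ * (S * U) = symMat ρ11 ρ22 r := by
    rw [conjTranspose_mul, hS.1, Matrix.mul_assoc, ← Matrix.mul_assoc S, hSS, ← Matrix.mul_assoc]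
    exact conjTranspose_mul_mul_transpose_of_eq_symMat hρ0.isHermitian h11.symm
      (by rw [mulVec_smul, star_smul_dotProduct_smul hu, h22])
      (by rw [mulVec_smul, dotProduct_smul, ← h12, smul_eq_mul, hur])
  have hρ₀ : (S * U) * (S * U)ᴴ = rho0 q₁ q₂ ρ₁ ρ₂ := by
    rw [← hSS, conjTranspose_mul, hS.1, Matrix.mul_assoc, ← Matrix.mul_assoc U,
      mul_eq_one_comm.mp hU, Matrix.one_mul]
  have hdet : IsUnit (S * U).det := by
    have h := hρ0.det_pos.ne'
    rw [← hρ₀, det_mul] at h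
    exact isUnit_iff_ne_zero.mpr (left_ne_zero_of_mul h)
  have hD : ∀ a b : ℝ, (S * U) * symMat a b 0 * (S * U)ᴴ
      = S * ((a : ℂ) • vecMulVec ν₁ (star ν₁) + (b : ℂ) • vecMulVec ν₂ (star ν₂)) * S := by
    intro a b
    rw [conjTranspose_mul, hS.1, ← vecMulVec_smul_star_smul hu ν₂,
      ← transpose_of_mul_symMat_mul_conjTranspose]
    simp only [U, Matrix.mul_assoc]
  have hsum : ρ11 + ρ22 = 1 := by
    have h := congrArg (fun A => (trace A).re) hR
    rw [re_trace_symMat, trace_mul_comm, hρ₀, trace_rho0 hq htr₁ htr₂, Complex.one_re] at h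
    linarith
  have hr : 2 * r < 1 := hsum ▸ two_mul_lt_add_of_symMat_posDef (hR ▸ .conjTranspose_mul_self _
    (mulVec_injective_of_isUnit ((isUnit_iff_isUnit_det _).mpr hdet)))
  subst hCeq
  rw [pcorOpt_eq_sSup_reducedValues hdet (by rw [hD, hbar₁]) (by rw [hD, hbar₂])
    (by rw [symMat_add, add_sub_cancel, sub_add_cancel, add_zero, symMat_one]), hR]
  exact (isGreatest_reducedValues hsum h1 h2 hr hQ.le hQr.le (by linarith only [hCsum])).csSup_eq

/-- If `C₁ = C₂ = C`, `ρ₁₂ ≠ 0`, `|ρ₁₂| ≤ ρ₁₁` and `|ρ₁₂| ≤ ρ₂₂`,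
then for `0 < Q < 2|ρ₁₂|`,
`P_cor^opt(Q) = (1−Q)/2 + ((2C−1)/2)√((1−2|ρ₁₂|)(1+2|ρ₁₂|−2Q))`. -/
theorem stmt19
    (q₁ q₂ : ℝ) (ρ₁ ρ₂ : Matrix (Fin 2) (Fin 2) ℂ)
    (hq₁ : 0 < q₁) (hq₂ : 0 < q₂) (hq : q₁ + q₂ = 1)
    (hρ₁ : ρ₁.PosSemidef) (htr₁ : ρ₁.trace = 1)
    (hρ₂ : ρ₂.PosSemidef) (htr₂ : ρ₂.trace = 1)
    (hρ0 : (rho0 q₁ q₂ ρ₁ ρ₂).PosDef)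
    (S : Matrix (Fin 2) (Fin 2) ℂ) (hS : S.PosSemidef) (hSS : S * S = rho0 q₁ q₂ ρ₁ ρ₂)
    (ν₁ ν₂ : Fin 2 → ℂ)
    (hν₁ : star ν₁ ⬝ᵥ ν₁ = 1) (hν₂ : star ν₂ ⬝ᵥ ν₂ = 1) (hν₁₂ : star ν₁ ⬝ᵥ ν₂ = 0)
    (C₁ C₂ : ℝ) (hC12 : C₁ ≤ C₂) (hCsum : 1 < C₁ + C₂)
    (hbar₁ : S * ((C₁ : ℂ) • vecMulVec ν₁ (star ν₁)
        + ((1 - C₂ : ℝ) : ℂ) • vecMulVec ν₂ (star ν₂)) * S = (q₁ : ℂ) • ρ₁)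
    (hbar₂ : S * (((1 - C₁ : ℝ) : ℂ) • vecMulVec ν₁ (star ν₁)
        + (C₂ : ℂ) • vecMulVec ν₂ (star ν₂)) * S = (q₂ : ℂ) • ρ₂)
    (ρ11 ρ22 : ℝ) (ρ12 : ℂ)
    (h11 : (ρ11 : ℂ) = star ν₁ ⬝ᵥ (rho0 q₁ q₂ ρ₁ ρ₂ *ᵥ ν₁))
    (h22 : (ρ22 : ℂ) = star ν₂ ⬝ᵥ (rho0 q₁ q₂ ρ₁ ρ₂ *ᵥ ν₂))
    (h12 : ρ12 = star ν₁ ⬝ᵥ (rho0 q₁ q₂ ρ₁ ρ₂ *ᵥ ν₂))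
    (hCeq : C₁ = C₂) (h12nz : ρ12 ≠ 0)
    (h1 : ‖ρ12‖ ≤ ρ11) (h2 : ‖ρ12‖ ≤ ρ22) :
    ∀ Q : ℝ, 0 < Q → Q < 2 * ‖ρ12‖ →
      PcorOpt Q q₁ q₂ ρ₁ ρ₂ = (1 - Q) / 2 + ((2 * C₂ - 1) / 2)
        * Real.sqrt ((1 - 2 * ‖ρ12‖) * (1 + 2 * ‖ρ12‖ - 2 * Q)) :=
  stmt19_general q₁ q₂ ρ₁ ρ₂ hq htr₁ htr₂ hρ0 S hS hSS ν₁ ν₂ hν₁ hν₂ hν₁₂ C₁ C₂ hCsum hbar₁ hbar₂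
    ρ11 ρ22 ρ12 h11 h22 h12 hCeq h1 h2

end FRIR
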